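/- (Uniqueness of the NDMPI) Let A be an m×n dual complex matrix. If X and Y are both NDMPIs of A, i.e., both satisfy A*·A·X·A·A* = A*·A·A*, X·A·X = X, (A·X)* = A·X, (X·A)* = X·A, and the same four equations with Y in place of X, then X = Y. -/

import Mathlib

open Matrix

/-- The dual complex numbers ℂ[ε] with ε² = 0 (dual numbers over ℂ). -/
abbrev DualComplex := DualNumber ℂ

/-- Conjugation on dual complex numbers: star (a + b·ε) = (conj a) + (conj b)·ε. -/
noncomputable instance : StarRing DualComplex where
  star x := ⟨star x.fst, star x.snd⟩
  star_involutive x := TrivSqZeroExt.ext (star_star x.fst) (star_star x.snd)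
  star_mul x y := TrivSqZeroExt.ext
    (by simp [TrivSqZeroExt.fst_mul, mul_comm]; erw [TrivSqZeroExt.fst_mul]; exact mul_comm _ _)
    (by simp [TrivSqZeroExt.snd_mul]; erw [TrivSqZeroExt.snd_mul]; simp only [smul_eq_mul, MulOpposite.smul_eq_mul_unop, MulOpposite.unop_op]; rw [add_comm]; exact congrArg₂ (· + ·) (mul_comm _ _) (mul_comm _ _))
  star_add x y := TrivSqZeroExt.ext (by simp; rfl) (by simp; rfl)

/-- `X` is a new dual Moore–Penrose inverse (NDMPI) of `M`:
`M*·M·X·M·M* = M*·M·M*`, `X·M·X = X`, `(M·X)* = M·X`, `(X·M)* = X·M`. -/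
def IsNDMPI {m n : ℕ} (M : Matrix (Fin m) (Fin n) DualComplex)
    (X : Matrix (Fin n) (Fin m) DualComplex) : Prop :=
  Mᴴ * M * X * M * Mᴴ = Mᴴ * M * Mᴴ ∧
  X * M * X = X ∧
  (M * X)ᴴ = M * X ∧
  (X * M)ᴴ = X * M

/-!
Over `ℂ`, `Bᴴ B = 0` forces `B = 0`, so `Aᴴ A` cancels on the left and `A Aᴴ` on the right.
Taking standard parts in the NDMPI equations therefore shows that the standard parts of `X` and
`Y` are Moore–Penrose inverses of that of `A`, hence equal. So `D = X - Y = ε • E` is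
infinitesimal: `D A D = 0`, the first equations give `A D A = 0` by the same cancellation, and
the second ones give `X A D + D A X = D`. As `A D` is Hermitian and `A D = (A X)(A D)`, it equals
its adjoint `(A D)(A X) = (A D A) X = 0`; likewise `D A = 0`, so `D = X A D + D A X = 0`.
-/

open scoped ComplexOrder DualNumber

namespace Matrix

variable {m n R : Type*}

section MoorePenrose

variable [Fintype m] [Fintype n] [NonUnitalSemiring R] [StarRing R]

def IsMoorePenroseInverse (A : Matrix m n R) (X : Matrix n m R) : Prop :=
  A * X * A = A ∧ X * A * X = X ∧ (A * X).IsHermitian ∧ (X * A).IsHermitian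

theorem IsMoorePenroseInverse.unique {A : Matrix m n R} {X Y : Matrix n m R}
    (hX : IsMoorePenroseInverse A X) (hY : IsMoorePenroseInverse A Y) : X = Y := by
  obtain ⟨hX1, hX2, hX3, hX4⟩ := hX
  obtain ⟨hY1, hY2, hY3, hY4⟩ := hY
  have hAX : A * X = A * Y := calc
    A * X = (A * X)ᴴ := hX3.symm
    _ = (A * Y * (A * X))ᴴ := by rw [← Matrix.mul_assoc, hY1]
    _ = A * X * (A * Y) := by rw [conjTranspose_mul, hX3, hY3]
    _ = A * Y := by rw [← Matrix.mul_assoc, hX1]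
  have hXA : X * A = Y * A := calc
    X * A = (X * A)ᴴ := hX4.symm
    _ = (X * A * (Y * A))ᴴ := by rw [Matrix.mul_assoc X, ← Matrix.mul_assoc A, hY1]
    _ = Y * A * (X * A) := by rw [conjTranspose_mul, hX4, hY4]
    _ = Y * A := by rw [Matrix.mul_assoc Y, ← Matrix.mul_assoc A, hX1]
  calc X = X * A * X := hX2.symm
    _ = Y * (A * Y) := by rw [hXA, Matrix.mul_assoc, hAX]
    _ = Y := by rw [← Matrix.mul_assoc, hY2]

theorem eq_zero_of_mul_mul_eq_zero {A : Matrix m n R} {G D : Matrix n m R}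
    (hAG : (A * G).IsHermitian) (hGA : (G * A).IsHermitian)
    (hAD : (A * D).IsHermitian) (hDA : (D * A).IsHermitian)
    (hADA : A * D * A = 0) (hD : G * A * D + D * A * G = D) : D = 0 := by
  have hAD_eq : A * D = A * G * (A * D) := calc
    A * D = A * (G * A * D + D * A * G) := by rw [hD]
    _ = A * G * (A * D) + A * D * A * G := by simp only [Matrix.mul_add, Matrix.mul_assoc]
    _ = A * G * (A * D) := by rw [hADA, Matrix.zero_mul, add_zero]
  have hDA_eq : D * A = D * A * (G * A) := calc
    D * A = (G * A * D + D * A * G) * A := by rw [hD]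
    _ = G * (A * D * A) + D * A * (G * A) := by simp only [Matrix.add_mul, Matrix.mul_assoc]
    _ = D * A * (G * A) := by rw [hADA, Matrix.mul_zero, zero_add]
  have hAD0 : A * D = 0 := calc
    A * D = (A * G * (A * D))ᴴ := by rw [← hAD_eq, hAD.eq]
    _ = A * D * A * G := by rw [conjTranspose_mul, hAD.eq, hAG.eq]; simp only [Matrix.mul_assoc]
    _ = 0 := by rw [hADA, Matrix.zero_mul]
  have hDA0 : D * A = 0 := calc
    D * A = (D * A * (G * A))ᴴ := by rw [← hDA_eq, hDA.eq]
    _ = G * (A * D * A) := by rw [conjTranspose_mul, hDA.eq, hGA.eq]; simp only [Matrix.mul_assoc]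
    _ = 0 := by rw [hADA, Matrix.mul_zero]
  rw [← hD, Matrix.mul_assoc, hAD0, hDA0, Matrix.mul_zero, Matrix.zero_mul, add_zero]

end MoorePenrose

section Cancel

variable [Fintype m] [Fintype n] [Ring R] [PartialOrder R] [StarRing R] [StarOrderedRing R]
  [NoZeroDivisors R]

theorem conjTranspose_mul_self_mul_inj {p : Type*} {A : Matrix m n R} {B C : Matrix n p R} :
    Aᴴ * A * B = Aᴴ * A * C ↔ A * B = A * C := by
  rw [← sub_eq_zero, ← Matrix.mul_sub, conjTranspose_mul_self_mul_eq_zero, Matrix.mul_sub,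
    sub_eq_zero]

theorem mul_self_mul_conjTranspose_inj {p : Type*} {A : Matrix m n R} {B C : Matrix p m R} :
    B * (A * Aᴴ) = C * (A * Aᴴ) ↔ B * A = C * A := by
  rw [← sub_eq_zero, ← Matrix.sub_mul, mul_self_mul_conjTranspose_eq_zero, Matrix.sub_mul,
    sub_eq_zero]

end Cancel

section DualNumber

variable [CommRing R]

def standardPart (M : Matrix m n R[ε]) : Matrix m n R := M.map TrivSqZeroExt.fst

theorem standardPart_mul {p : Type*} [Fintype n] (M : Matrix m n R[ε]) (N : Matrix n p R[ε]) :
    (M * N).standardPart = M.standardPart * N.standardPart :=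
  Matrix.map_mul (f := TrivSqZeroExt.fstHom R R R)

theorem standardPart_sub (M N : Matrix m n R[ε]) :
    (M - N).standardPart = M.standardPart - N.standardPart := rfl

theorem eps_smul_eq_zero_iff {M : Matrix m n R[ε]} :
    (ε : R[ε]) • M = 0 ↔ M.standardPart = 0 := by
  simp [← Matrix.ext_iff, standardPart, TrivSqZeroExt.ext_iff]

theorem exists_eq_eps_smul {M : Matrix m n R[ε]} (hM : M.standardPart = 0) :
    ∃ N : Matrix m n R[ε], M = (ε : R[ε]) • N := by
  refine ⟨M.map fun x => TrivSqZeroExt.inl x.snd, Matrix.ext fun i j => ?_⟩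
  have := congrFun (congrFun hM i) j
  ext <;> simp_all [standardPart]

theorem mul_eq_zero_of_standardPart_eq_zero {p : Type*} [Fintype n] {M : Matrix m n R[ε]}
    {N : Matrix n p R[ε]} (hM : M.standardPart = 0) (hN : N.standardPart = 0) : M * N = 0 := by
  obtain ⟨M', rfl⟩ := exists_eq_eps_smul hM
  obtain ⟨N', rfl⟩ := exists_eq_eps_smul hN
  rw [Matrix.smul_mul, Matrix.mul_smul, smul_smul, DualNumber.eps_mul_eps, zero_smul]

end DualNumber

theorem standardPart_conjTranspose (M : Matrix m n DualComplex) :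
    Mᴴ.standardPart = M.standardPartᴴ := rfl

theorem mul_mul_eq_zero_of_standardPart_eq_zero [Fintype m] [Fintype n]
    (A : Matrix m n DualComplex) {D : Matrix n m DualComplex} (hD : D.standardPart = 0)
    (h : Aᴴ * A * D * A * Aᴴ = 0) : A * D * A = 0 := by
  obtain ⟨E, rfl⟩ := exists_eq_eps_smul hD
  simp only [Matrix.mul_smul, Matrix.smul_mul, eps_smul_eq_zero_iff, standardPart_mul,
    standardPart_conjTranspose] at h ⊢
  have h' : A.standardPart * (E.standardPart * A.standardPart * A.standardPartᴴ) = 0 :=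
    (conjTranspose_mul_self_mul_eq_zero _ _).1 (by simpa only [Matrix.mul_assoc] using h)
  exact (mul_self_mul_conjTranspose_eq_zero _ _).1 (by simpa only [Matrix.mul_assoc] using h')

end Matrix

open Matrix

theorem IsNDMPI.isMoorePenroseInverse_standardPart {m n : ℕ}
    {A : Matrix (Fin m) (Fin n) DualComplex} {X : Matrix (Fin n) (Fin m) DualComplex}
    (h : IsNDMPI A X) : IsMoorePenroseInverse A.standardPart X.standardPart := by
  obtain ⟨h1, h2, h3, h4⟩ := h
  refine ⟨?_, by rw [← standardPart_mul, ← standardPart_mul, h2], ?_, ?_⟩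
  · set A₀ := A.standardPart
    have h1' := congrArg standardPart h1
    simp only [standardPart_mul, standardPart_conjTranspose] at h1'
    have hAXA : A₀ * X.standardPart * (A₀ * A₀ᴴ) = 1 * (A₀ * A₀ᴴ) := by
      rw [Matrix.one_mul, Matrix.mul_assoc]
      exact conjTranspose_mul_self_mul_inj.1 (by simpa only [Matrix.mul_assoc] using h1')
    rw [mul_self_mul_conjTranspose_inj.1 hAXA, Matrix.one_mul]
  · rw [IsHermitian, ← standardPart_mul, ← standardPart_conjTranspose, h3]
  · rw [IsHermitian, ← standardPart_mul, ← standardPart_conjTranspose, h4]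

/-- Uniqueness of the NDMPI: if `X` and `Y` are both NDMPIs of `A`, then `X = Y`. -/
theorem stmt_18 {m n : ℕ} (A : Matrix (Fin m) (Fin n) DualComplex)
    (X Y : Matrix (Fin n) (Fin m) DualComplex)
    (hX : IsNDMPI A X) (hY : IsNDMPI A Y) : X = Y := by
  have hst : X.standardPart = Y.standardPart :=
    hX.isMoorePenroseInverse_standardPart.unique hY.isMoorePenroseInverse_standardPart
  have hD : (X - Y).standardPart = 0 := by rw [standardPart_sub, hst, sub_self]
  obtain ⟨hX1, hX2, hX3, hX4⟩ := hX
  obtain ⟨hY1, hY2, hY3, hY4⟩ := hY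
  have hDAD : (X - Y) * A * (X - Y) = 0 :=
    mul_eq_zero_of_standardPart_eq_zero (by rw [standardPart_mul, hD, Matrix.zero_mul]) hD
  rw [← sub_eq_zero]
  refine eq_zero_of_mul_mul_eq_zero hX3 hX4 ?_ ?_ ?_ ?_
  · rw [IsHermitian, Matrix.mul_sub, conjTranspose_sub, hX3, hY3]
  · rw [IsHermitian, Matrix.sub_mul, conjTranspose_sub, hX4, hY4]
  · refine mul_mul_eq_zero_of_standardPart_eq_zero A hD ?_
    rw [Matrix.mul_sub, Matrix.sub_mul, Matrix.sub_mul, hX1, hY1, sub_self]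
  · calc X * A * (X - Y) + (X - Y) * A * X
        = (X * A * X - Y * A * Y) + (X - Y) * A * (X - Y) := by
          simp only [Matrix.mul_sub, Matrix.sub_mul]; abel
      _ = X - Y := by rw [hX2, hY2, hDAD, add_zero]
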